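/- Let M_t = ∫₀^t U dB be the martingale from the construction with terminal value ±π (each with probability ½), and define Y¹_t = cos(M_t) + 1, Y²_t = sin(M_t). Then by Itô's formula, (Y¹, Y²) has dynamics dY¹ = −sin(M) U dB − ½ cos(M) U² dt and dY² = cos(M) U dB − ½ sin(M) U² dt; moreover Y¹_T = Y²_T = 0 almost surely, while (Y¹, Y²) is not identically zero. -/

import Mathlib

/-!
The dynamics are Itô's formula for `cos` and `sin`, whose second derivatives are `-cos` and
`-sin`. As `η` is `ℱ_T`-measurable, `M_T = η = ±π`, where both `cos + 1` and `sin` vanish.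
As `ℱ_0` is trivial, `M_0 = E[η]`, which is `0` because `P(B_T ≥ 0) = 1/2`; and `cos 0 + 1 = 2`.
-/

open MeasureTheory Real

theorem Real.deriv_deriv_cos : deriv (deriv cos) = fun x => -cos x := by
  rw [deriv_cos', deriv.fun_neg', deriv_sin]

theorem Real.deriv_deriv_sin : deriv (deriv sin) = fun x => -sin x := by
  rw [deriv_sin, deriv_cos']

theorem MeasureTheory.integral_piecewise_const_neg_eq_zero {Ω : Type*} {m : MeasurableSpace Ω}
    {μ : Measure Ω} [IsProbabilityMeasure μ] {s : Set Ω} [DecidablePred (· ∈ s)]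
    (hs : MeasurableSet s) (hμs : μ s = 1 / 2) (c : ℝ) :
    ∫ ω, s.piecewise (fun _ => c) (fun _ => -c) ω ∂μ = 0 := by
  have hμsc : μ sᶜ = 1 / 2 := by
    rw [prob_compl_eq_one_sub hs, hμs, one_div, ENNReal.one_sub_inv_two]
  rw [integral_piecewise hs (integrable_const c).integrableOn (integrable_const _).integrableOn,
    setIntegral_const, setIntegral_const, measureReal_def, measureReal_def, hμs, hμsc]
  simp

theorem stmt14_general {Ω : Type*} {m0 : MeasurableSpace Ω} (μ : Measure Ω)
    [IsProbabilityMeasure μ] (ℱ : Filtration ℝ m0) (T : ℝ) (hT : 0 < T)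
    (B U : ℝ → Ω → ℝ) (η : Ω → ℝ)
    (hη : η = fun ω => if 0 ≤ B T ω then Real.pi else -Real.pi)
    (hBmeas : Measurable[ℱ T] (B T))
    (hhalf : μ {ω | 0 ≤ B T ω} = 1 / 2)
    (h0 : ℱ 0 = ⊥)
    (M : ℝ → Ω → ℝ) (hM : ∀ t, M t = μ[η | ℱ t])
    (Solves : (ℝ → Ω → ℝ) → (ℝ → Ω → ℝ) → (ℝ → Ω → ℝ) → Prop)
    -- Itô's formula for `C²` functions of `M`:
    (hIto : ∀ φ : ℝ → ℝ, ContDiff ℝ 2 φ →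
      Solves (fun t ω => φ (M t ω))
        (fun t ω => (1 / 2) * deriv (deriv φ) (M t ω) * (U t ω) ^ 2)
        (fun t ω => deriv φ (M t ω) * U t ω))
    -- adding a constant does not change the dynamics:
    (hshift : ∀ P b σ (c : ℝ), Solves P b σ → Solves (fun t ω => P t ω + c) b σ) :
    (Solves (fun t ω => Real.cos (M t ω) + 1)
        (fun t ω => -(1 / 2) * Real.cos (M t ω) * (U t ω) ^ 2)
        (fun t ω => -Real.sin (M t ω) * U t ω) ∧
      Solves (fun t ω => Real.sin (M t ω))
        (fun t ω => -(1 / 2) * Real.sin (M t ω) * (U t ω) ^ 2)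
        (fun t ω => Real.cos (M t ω) * U t ω)) ∧
    (∀ᵐ ω ∂μ, Real.cos (M T ω) + 1 = 0 ∧ Real.sin (M T ω) = 0) ∧
    ¬ (∀ t ∈ Set.Icc (0 : ℝ) T, ∀ᵐ ω ∂μ,
        Real.cos (M t ω) + 1 = 0 ∧ Real.sin (M t ω) = 0) := by
  have hA : MeasurableSet[ℱ T] {ω | 0 ≤ B T ω} := measurableSet_le measurable_const hBmeas
  replace hη : η = {ω | 0 ≤ B T ω}.piecewise (fun _ => π) fun _ => -π := hη
  have hMT : M T = η := by
    rw [hM T, hη]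
    exact condExp_of_stronglyMeasurable (ℱ.le T)
      (stronglyMeasurable_const.piecewise hA stronglyMeasurable_const)
      (Integrable.piecewise (ℱ.le T _ hA) (integrable_const _).integrableOn
        (integrable_const _).integrableOn)
  have hM0 : M 0 = 0 := by
    rw [hM 0, h0, condExp_bot, hη, integral_piecewise_const_neg_eq_zero (ℱ.le T _ hA) hhalf]
    rfl
  have hcos := hIto cos contDiff_cos
  have hsin := hIto sin contDiff_sin
  rw [deriv_deriv_cos, deriv_cos'] at hcos
  rw [deriv_deriv_sin, Real.deriv_sin] at hsin
  refine ⟨⟨?_, ?_⟩, ?_, ?_⟩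
  · convert hshift _ _ _ 1 hcos using 3 with t ω
    ring
  · convert hsin using 3 with t ω
    ring
  · refine .of_forall fun ω => ?_
    rw [hMT, hη]
    by_cases h : 0 ≤ B T ω <;> simp [Set.piecewise, h]
  · intro hvanish
    obtain ⟨ω, hω, -⟩ := (hvanish 0 ⟨le_rfl, hT.le⟩).exists
    norm_num [hM0] at hω

/-- **Dynamics and non-triviality of the sphere-martingale example.**
Let `B` be a one-dimensional Brownian motion on `[0,T]`, `η = π` if `B_T ≥ 0` and
`η = −π` otherwise, and `M_t = E[η | ℱ_t] = ∫₀^t U dB`.  The Itô calculus is encoded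
through an abstract predicate `Solves P b σ` (meaning `dP = b dt + σ dB`), assumed to
satisfy Itô's formula for `C²` functions of `M` and to be invariant under adding
constants.  Setting `Y¹ = cos(M) + 1` and `Y² = sin(M)`, we have the dynamics
`dY¹ = −½ cos(M) U² dt − sin(M) U dB` and `dY² = −½ sin(M) U² dt + cos(M) U dB`;
moreover `Y¹_T = Y²_T = 0` a.s., while `(Y¹, Y²)` is not identically zero. -/
theorem stmt14 {Ω : Type*} {m0 : MeasurableSpace Ω} (μ : Measure Ω)
    [IsProbabilityMeasure μ] (ℱ : Filtration ℝ m0) (T : ℝ) (hT : 0 < T)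
    (B U : ℝ → Ω → ℝ) (η : Ω → ℝ)
    (hη : η = fun ω => if 0 ≤ B T ω then Real.pi else -Real.pi)
    (hBmeas : Measurable[ℱ T] (B T))
    (hhalf : μ {ω | 0 ≤ B T ω} = 1 / 2)
    (h0 : ℱ 0 = ⊥)
    (M : ℝ → Ω → ℝ) (hM : ∀ t, M t = μ[η | ℱ t])
    (Solves : (ℝ → Ω → ℝ) → (ℝ → Ω → ℝ) → (ℝ → Ω → ℝ) → Prop)
    -- `dM = U dB` (martingale representation):
    (hMsolves : Solves M (fun _ _ => 0) U)
    -- Itô's formula for `C²` functions of `M`: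
    (hIto : ∀ φ : ℝ → ℝ, ContDiff ℝ 2 φ →
      Solves (fun t ω => φ (M t ω))
        (fun t ω => (1 / 2) * deriv (deriv φ) (M t ω) * (U t ω) ^ 2)
        (fun t ω => deriv φ (M t ω) * U t ω))
    -- adding a constant does not change the dynamics:
    (hshift : ∀ P b σ (c : ℝ), Solves P b σ → Solves (fun t ω => P t ω + c) b σ) :
    (Solves (fun t ω => Real.cos (M t ω) + 1)
        (fun t ω => -(1 / 2) * Real.cos (M t ω) * (U t ω) ^ 2)
        (fun t ω => -Real.sin (M t ω) * U t ω) ∧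
      Solves (fun t ω => Real.sin (M t ω))
        (fun t ω => -(1 / 2) * Real.sin (M t ω) * (U t ω) ^ 2)
        (fun t ω => Real.cos (M t ω) * U t ω)) ∧
    (∀ᵐ ω ∂μ, Real.cos (M T ω) + 1 = 0 ∧ Real.sin (M T ω) = 0) ∧
    ¬ (∀ t ∈ Set.Icc (0 : ℝ) T, ∀ᵐ ω ∂μ,
        Real.cos (M t ω) + 1 = 0 ∧ Real.sin (M t ω) = 0) :=
  stmt14_general μ ℱ T hT B U η hη hBmeas hhalf h0 M hM Solves hIto hshift
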